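/- Let A be a preabelian category and let B be a full additive subcategory of A. Then: (1) B is coreflective if and only if B is precovering and closed under taking cokernels (i.e., the cokernel in A of any morphism between objects of B belongs to B); (2) B is reflective if and only if B is preenveloping and closed under taking kernels. -/

import Mathlib

/-!
A `B`-coreflection of `A` is exactly a terminal object of `CostructuredArrow (ι B) A`, i.e. a
`B`-precover `c : Q ⟶ A` through which maps from `B` factor uniquely; in the preadditive setting
uniqueness means that no nonzero map from an object of `B` is killed by `c`.

If `f : X ⟶ Y` lies in `B` and `c : Q ⟶ cokernel f` is a coreflection, the cokernel projection
factors through `c`, the factorization vanishes on `f` by uniqueness, and so it descends to a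
section of `c`; uniqueness again makes `c` an isomorphism, so `cokernel f ∈ B`.

Conversely, let `f : X ⟶ A` be a precover and `g` a precover of `kernel f`, and put
`q = g ≫ kernel.ι f`. The map `cokernel q ⟶ A` induced by `f` is again a precover. Every map from
`B` to `X` killed by `f` factors through `q`, hence is killed by `cokernel.π q`; applied to a lift
`r` of `cokernel q ⟶ A` through `f`, this shows that `r` is a section of `cokernel.π q`, which gives
uniqueness of factorizations. The reflective case is dual.
-/

open CategoryTheory Limits

universe w v u

namespace PaperStmt

variable {C : Type u} [Category.{v} C]

/-- The subcategory (object property) `B` is closed under isomorphisms. -/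
def ClosedUnderIso (B : C → Prop) : Prop :=
  ∀ ⦃X Y : C⦄, (X ≅ Y) → B X → B Y

/-- `B` is closed under direct summands (retracts). -/
def ClosedUnderSummands (B : C → Prop) : Prop :=
  ∀ ⦃X Y : C⦄, B X → (∃ (s : Y ⟶ X) (r : X ⟶ Y), s ≫ r = 𝟙 Y) → B Y

/-- `f : X ⟶ A` is a `B`-precover of `A`. -/
def IsPrecover (B : C → Prop) {X A : C} (f : X ⟶ A) : Prop :=
  B X ∧ ∀ ⦃Y : C⦄, B Y → ∀ g : Y ⟶ A, ∃ h : Y ⟶ X, h ≫ f = g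

/-- `B` is a precovering subcategory. -/
def Precovering (B : C → Prop) : Prop :=
  ∀ A : C, ∃ (X : C) (f : X ⟶ A), IsPrecover B f

/-- `f : A ⟶ X` is a `B`-preenvelope of `A`. -/
def IsPreenvelope (B : C → Prop) {A X : C} (f : A ⟶ X) : Prop :=
  B X ∧ ∀ ⦃Y : C⦄, B Y → ∀ g : A ⟶ Y, ∃ h : X ⟶ Y, f ≫ h = g

/-- `B` is a preenveloping subcategory. -/
def Preenveloping (B : C → Prop) : Prop :=
  ∀ A : C, ∃ (X : C) (f : A ⟶ X), IsPreenvelope B f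

/-- `f : X ⟶ A` is a `B`-coreflection of `A`. -/
def IsCoreflection (B : C → Prop) {X A : C} (f : X ⟶ A) : Prop :=
  B X ∧ ∀ ⦃Y : C⦄, B Y → ∀ g : Y ⟶ A, ∃! h : Y ⟶ X, h ≫ f = g

/-- `B` is a coreflective subcategory: the inclusion has a right adjoint. -/
def IsCoreflectiveSub (B : C → Prop) : Prop :=
  (ObjectProperty.ι B).IsLeftAdjoint

/-- `B` is a reflective subcategory: the inclusion has a left adjoint. -/
def IsReflectiveSub (B : C → Prop) : Prop :=
  (ObjectProperty.ι B).IsRightAdjoint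

section Zero

variable [HasZeroMorphisms C]

/-- `k` is a pseudokernel of `f`. -/
def IsPseudokernel {K X Y : C} (f : X ⟶ Y) (k : K ⟶ X) : Prop :=
  k ≫ f = 0 ∧ ∀ ⦃K' : C⦄ (k' : K' ⟶ X), k' ≫ f = 0 → ∃ t : K' ⟶ K, t ≫ k = k'

/-- `c` is a pseudocokernel of `f`. -/
def IsPseudocokernel {X Y Q : C} (f : X ⟶ Y) (c : Y ⟶ Q) : Prop :=
  f ≫ c = 0 ∧ ∀ ⦃Q' : C⦄ (c' : Y ⟶ Q'), f ≫ c' = 0 → ∃ t : Q ⟶ Q', c ≫ t = c'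

end Zero

/-- `C` has pseudokernels. -/
def HasPseudokernels (C : Type u) [Category.{v} C] [HasZeroMorphisms C] : Prop :=
  ∀ ⦃X Y : C⦄ (f : X ⟶ Y), ∃ (K : C) (k : K ⟶ X), IsPseudokernel f k

/-- `C` has pseudocokernels. -/
def HasPseudocokernels (C : Type u) [Category.{v} C] [HasZeroMorphisms C] : Prop :=
  ∀ ⦃X Y : C⦄ (f : X ⟶ Y), ∃ (Q : C) (c : Y ⟶ Q), IsPseudocokernel f c

end PaperStmt

namespace PaperStmt

variable {C : Type u} [Category.{v} C] {B : C → Prop}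

def IsReflection (B : C → Prop) {A X : C} (f : A ⟶ X) : Prop :=
  B X ∧ ∀ ⦃Y : C⦄, B Y → ∀ g : A ⟶ Y, ∃! h : X ⟶ Y, f ≫ h = g

section Adjoint

lemma isCoreflection_of_isTerminal {A : C} {T : CostructuredArrow (ObjectProperty.ι B) A}
    (hT : IsTerminal T) : IsCoreflection B T.hom := by
  refine ⟨T.left.property, fun Y hY g => ?_⟩
  let G : CostructuredArrow (ObjectProperty.ι B) A :=
    CostructuredArrow.mk (Y := (⟨Y, hY⟩ : ObjectProperty.FullSubcategory B)) g
  refine ⟨(hT.from G).left.hom, CostructuredArrow.w (hT.from G), fun k hk => ?_⟩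
  exact congrArg (·.left.hom)
    (hT.hom_ext (CostructuredArrow.homMk (ObjectProperty.homMk k) hk : G ⟶ T) (hT.from G))

noncomputable def IsCoreflection.isTerminal {X A : C} {f : X ⟶ A} (hf : IsCoreflection B f) :
    IsTerminal (CostructuredArrow.mk (S := ObjectProperty.ι B)
      (Y := (⟨X, hf.1⟩ : ObjectProperty.FullSubcategory B)) f) :=
  IsTerminal.ofUniqueHom
    (fun G => CostructuredArrow.homMk (ObjectProperty.homMk (hf.2 G.left.property G.hom).choose)
      (by simpa using (hf.2 G.left.property G.hom).choose_spec.1))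
    (fun G m => CostructuredArrow.hom_ext _ _ <| ObjectProperty.hom_ext _ <|
      (hf.2 G.left.property G.hom).choose_spec.2 _ (by simpa using m.w))

theorem isLeftAdjoint_ι_iff :
    (ObjectProperty.ι B).IsLeftAdjoint ↔ ∀ A : C, ∃ (X : C) (f : X ⟶ A), IsCoreflection B f := by
  rw [isLeftAdjoint_iff_hasTerminal_costructuredArrow]
  refine forall_congr' fun A => ⟨fun _ => ⟨_, _, isCoreflection_of_isTerminal terminalIsTerminal⟩,
    fun ⟨_, _, hf⟩ => IsCoreflection.isTerminal hf |>.hasTerminal⟩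

lemma isReflection_of_isInitial {A : C} {T : StructuredArrow A (ObjectProperty.ι B)}
    (hT : IsInitial T) : IsReflection B T.hom := by
  refine ⟨T.right.property, fun Y hY g => ?_⟩
  let G : StructuredArrow A (ObjectProperty.ι B) :=
    StructuredArrow.mk (Y := (⟨Y, hY⟩ : ObjectProperty.FullSubcategory B)) g
  refine ⟨(hT.to G).right.hom, StructuredArrow.w (hT.to G), fun k hk => ?_⟩
  exact congrArg (·.right.hom)
    (hT.hom_ext (StructuredArrow.homMk (ObjectProperty.homMk k) hk : T ⟶ G) (hT.to G))

noncomputable def IsReflection.isInitial {A X : C} {f : A ⟶ X} (hf : IsReflection B f) :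
    IsInitial (StructuredArrow.mk (T := ObjectProperty.ι B)
      (Y := (⟨X, hf.1⟩ : ObjectProperty.FullSubcategory B)) f) :=
  IsInitial.ofUniqueHom
    (fun G => StructuredArrow.homMk (ObjectProperty.homMk (hf.2 G.right.property G.hom).choose)
      (by simpa using (hf.2 G.right.property G.hom).choose_spec.1))
    (fun G m => StructuredArrow.hom_ext _ _ <| ObjectProperty.hom_ext _ <|
      (hf.2 G.right.property G.hom).choose_spec.2 _ (by simpa using m.w))

theorem isRightAdjoint_ι_iff :
    (ObjectProperty.ι B).IsRightAdjoint ↔ ∀ A : C, ∃ (X : C) (f : A ⟶ X), IsReflection B f := by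
  rw [isRightAdjoint_iff_hasInitial_structuredArrow]
  refine forall_congr' fun A => ⟨fun _ => ⟨_, _, isReflection_of_isInitial initialIsInitial⟩,
    fun ⟨_, _, hf⟩ => IsReflection.isInitial hf |>.hasInitial⟩

end Adjoint

section Basic

variable {X A : C}

lemma IsCoreflection.isPrecover {f : X ⟶ A} (hf : IsCoreflection B f) : IsPrecover B f :=
  ⟨hf.1, fun _ hY g => (hf.2 hY g).exists⟩

lemma IsReflection.isPreenvelope {f : A ⟶ X} (hf : IsReflection B f) : IsPreenvelope B f :=
  ⟨hf.1, fun _ hY g => (hf.2 hY g).exists⟩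

lemma IsCoreflection.hom_ext {f : X ⟶ A} (hf : IsCoreflection B f) {Y : C} (hY : B Y)
    {h₁ h₂ : Y ⟶ X} (w : h₁ ≫ f = h₂ ≫ f) : h₁ = h₂ :=
  (hf.2 hY _).unique w rfl

lemma IsReflection.hom_ext {f : A ⟶ X} (hf : IsReflection B f) {Y : C} (hY : B Y)
    {h₁ h₂ : X ⟶ Y} (w : f ≫ h₁ = f ≫ h₂) : h₁ = h₂ :=
  (hf.2 hY _).unique w rfl

lemma IsCoreflection.isIso_of_comp_eq_id {f : X ⟶ A} (hf : IsCoreflection B f) {s : A ⟶ X}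
    (hs : s ≫ f = 𝟙 A) : IsIso f :=
  ⟨s, hf.hom_ext hf.1 (by simp [hs]), hs⟩

lemma IsReflection.isIso_of_comp_eq_id {f : A ⟶ X} (hf : IsReflection B f) {s : X ⟶ A}
    (hs : f ≫ s = 𝟙 A) : IsIso f :=
  ⟨s, hs, hf.hom_ext hf.1 (by simp [reassoc_of% hs])⟩

end Basic

section Zero

variable [HasZeroMorphisms C]

lemma IsCoreflection.isIso_of_cokernel {X Y : C} {f : X ⟶ Y} [HasCokernel f] (hX : B X)
    (hY : B Y) {Q : C} {c : Q ⟶ cokernel f} (hc : IsCoreflection B c) : IsIso c := by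
  obtain ⟨h, hh, -⟩ := hc.2 hY (cokernel.π f)
  have hfh : f ≫ h = 0 := hc.hom_ext hX (by simp [hh])
  exact hc.isIso_of_comp_eq_id (s := cokernel.desc f h hfh) (by ext; simp [hh])

lemma IsReflection.isIso_of_kernel {X Y : C} {f : X ⟶ Y} [HasKernel f] (hX : B X)
    (hY : B Y) {K : C} {e : kernel f ⟶ K} (he : IsReflection B e) : IsIso e := by
  obtain ⟨h, hh, -⟩ := he.2 hX (kernel.ι f)
  have hhf : h ≫ f = 0 := he.hom_ext hY (by simp [reassoc_of% hh])
  exact he.isIso_of_comp_eq_id (s := kernel.lift f h hhf) (by ext; simp [hh])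

lemma IsPrecover.cokernel_desc {X' X A : C} {f : X ⟶ A} (hf : IsPrecover B f) {q : X' ⟶ X}
    [HasCokernel q] (hq : q ≫ f = 0) (hQ : B (cokernel q)) :
    IsPrecover B (cokernel.desc q f hq) :=
  ⟨hQ, fun _ hY g => let ⟨h, hh⟩ := hf.2 hY g; ⟨h ≫ cokernel.π q, by simp [hh]⟩⟩

lemma IsPreenvelope.kernel_lift {X' X A : C} {f : A ⟶ X} (hf : IsPreenvelope B f) {q : X ⟶ X'}
    [HasKernel q] (hq : f ≫ q = 0) (hK : B (kernel q)) :
    IsPreenvelope B (kernel.lift q f hq) :=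
  ⟨hK, fun _ hY g => let ⟨h, hh⟩ := hf.2 hY g; ⟨kernel.ι q ≫ h, by simp [hh]⟩⟩

end Zero

section Preadditive

variable [Preadditive C] {X A : C}

lemma isCoreflection_of_isPrecover {f : X ⟶ A} (hf : IsPrecover B f)
    (h : ∀ ⦃Y : C⦄, B Y → ∀ g : Y ⟶ X, g ≫ f = 0 → g = 0) : IsCoreflection B f := by
  refine ⟨hf.1, fun Y hY g => ?_⟩
  obtain ⟨k, hk⟩ := hf.2 hY g
  exact ⟨k, hk, fun k' hk' => sub_eq_zero.1 (h hY _ (by simp [hk, hk']))⟩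

lemma isReflection_of_isPreenvelope {f : A ⟶ X} (hf : IsPreenvelope B f)
    (h : ∀ ⦃Y : C⦄, B Y → ∀ g : X ⟶ Y, f ≫ g = 0 → g = 0) : IsReflection B f := by
  refine ⟨hf.1, fun Y hY g => ?_⟩
  obtain ⟨k, hk⟩ := hf.2 hY g
  exact ⟨k, hk, fun k' hk' => sub_eq_zero.1 (h hY _ (by simp [hk, hk']))⟩

lemma isCoreflection_cokernel_desc {X' : C} {f : X ⟶ A} (hf : IsPrecover B f) [HasKernel f]
    {g : X' ⟶ kernel f} (hg : IsPrecover B g) [HasCokernel (g ≫ kernel.ι f)]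
    (hQ : B (cokernel (g ≫ kernel.ι f))) :
    IsCoreflection B (cokernel.desc (g ≫ kernel.ι f) f (by simp)) := by
  set q := g ≫ kernel.ι f
  have hπ : ∀ ⦃Z : C⦄, B Z → ∀ u : Z ⟶ X, u ≫ f = 0 → u ≫ cokernel.π q = 0 := by
    intro Z hZ u hu
    obtain ⟨w, hw⟩ := hg.2 hZ (kernel.lift f u hu)
    rw [← kernel.lift_ι f u hu, ← hw]
    simpa only [q, Category.assoc, comp_zero] using w ≫= cokernel.condition q
  obtain ⟨r, hr⟩ := hf.2 hQ (cokernel.desc q f (by simp [q]))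
  have hrπ : r ≫ cokernel.π q = 𝟙 _ := by
    ext
    simpa [sub_eq_zero] using hπ hf.1 (cokernel.π q ≫ r - 𝟙 X) (by simp [hr])
  refine isCoreflection_of_isPrecover (hf.cokernel_desc _ hQ) fun Y hY v hv => ?_
  calc v = (v ≫ r) ≫ cokernel.π q := by rw [Category.assoc, hrπ, Category.comp_id]
    _ = 0 := hπ hY _ (by rw [Category.assoc, hr, hv])

lemma isReflection_kernel_lift {X' : C} {f : A ⟶ X} (hf : IsPreenvelope B f) [HasCokernel f]
    {g : cokernel f ⟶ X'} (hg : IsPreenvelope B g) [HasKernel (cokernel.π f ≫ g)]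
    (hK : B (kernel (cokernel.π f ≫ g))) :
    IsReflection B (kernel.lift (cokernel.π f ≫ g) f (by simp)) := by
  set q := cokernel.π f ≫ g
  have hι : ∀ ⦃Z : C⦄, B Z → ∀ u : X ⟶ Z, f ≫ u = 0 → kernel.ι q ≫ u = 0 := by
    intro Z hZ u hu
    obtain ⟨w, hw⟩ := hg.2 hZ (cokernel.desc f u hu)
    rw [← cokernel.π_desc f u hu, ← hw]
    simpa only [q, Category.assoc, zero_comp] using kernel.condition q =≫ w
  obtain ⟨r, hr⟩ := hf.2 hK (kernel.lift q f (by simp [q]))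
  have hιr : kernel.ι q ≫ r = 𝟙 _ := by
    ext
    simpa [sub_eq_zero] using hι hf.1 (r ≫ kernel.ι q - 𝟙 X) (by simp [reassoc_of% hr])
  refine isReflection_of_isPreenvelope (hf.kernel_lift _ hK) fun Y hY v hv => ?_
  calc v = kernel.ι q ≫ r ≫ v := by rw [reassoc_of% hιr]
    _ = 0 := hι hY _ (by rw [reassoc_of% hr, hv])

end Preadditive

section Preabelian

variable [Preadditive C] [HasKernels C] [HasCokernels C]

theorem exists_isCoreflection_iff (hiso : ClosedUnderIso B) :
    (∀ A : C, ∃ (X : C) (f : X ⟶ A), IsCoreflection B f) ↔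
      Precovering B ∧ ∀ ⦃X Y : C⦄, B X → B Y → ∀ f : X ⟶ Y, B (cokernel f) := by
  refine ⟨fun h => ⟨fun A => ?_, fun X Y hX hY f => ?_⟩, fun ⟨hpre, hcok⟩ A => ?_⟩
  · obtain ⟨X, f, hf⟩ := h A
    exact ⟨X, f, hf.isPrecover⟩
  · obtain ⟨Q, c, hc⟩ := h (cokernel f)
    have := hc.isIso_of_cokernel hX hY
    exact hiso (asIso c) hc.1
  · obtain ⟨X, f, hf⟩ := hpre A
    obtain ⟨X', g, hg⟩ := hpre (kernel f)
    exact ⟨_, _, isCoreflection_cokernel_desc hf hg (hcok hg.1 hf.1 _)⟩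

theorem exists_isReflection_iff (hiso : ClosedUnderIso B) :
    (∀ A : C, ∃ (X : C) (f : A ⟶ X), IsReflection B f) ↔
      Preenveloping B ∧ ∀ ⦃X Y : C⦄, B X → B Y → ∀ f : X ⟶ Y, B (kernel f) := by
  refine ⟨fun h => ⟨fun A => ?_, fun X Y hX hY f => ?_⟩, fun ⟨hpre, hker⟩ A => ?_⟩
  · obtain ⟨X, f, hf⟩ := h A
    exact ⟨X, f, hf.isPreenvelope⟩
  · obtain ⟨K, e, he⟩ := h (kernel f)
    have := he.isIso_of_kernel hX hY
    exact hiso (asIso e).symm he.1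
  · obtain ⟨X, f, hf⟩ := hpre A
    obtain ⟨X', g, hg⟩ := hpre (cokernel f)
    exact ⟨_, _, isReflection_kernel_lift hf hg (hker hf.1 hg.1 _)⟩

end Preabelian

theorem preabelian_coreflective_reflective_iff_general
    {A : Type u} [Category.{v} A] [Preadditive A]
    [HasKernels A] [HasCokernels A]
    (B : A → Prop) (hiso : ClosedUnderIso B) :
    (IsCoreflectiveSub B ↔
      (Precovering B ∧ ∀ ⦃X Y : A⦄, B X → B Y → ∀ f : X ⟶ Y, B (cokernel f))) ∧
    (IsReflectiveSub B ↔
      (Preenveloping B ∧ ∀ ⦃X Y : A⦄, B X → B Y → ∀ f : X ⟶ Y, B (kernel f))) :=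
  ⟨isLeftAdjoint_ι_iff.trans (exists_isCoreflection_iff hiso),
    isRightAdjoint_ι_iff.trans (exists_isReflection_iff hiso)⟩

/-- Corollary 7.2: in a preabelian category, an additive subcategory is
coreflective iff it is precovering and closed under cokernels, and reflective iff it is
preenveloping and closed under kernels. -/
theorem preabelian_coreflective_reflective_iff
    {A : Type u} [Category.{v} A] [Preadditive A] [HasFiniteBiproducts A] [HasBinaryBiproducts A]
    [HasKernels A] [HasCokernels A]
    (B : A → Prop) (hiso : ClosedUnderIso B)
    (hzero : ∃ Z : A, IsZero Z ∧ B Z)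
    (hsum : ∀ ⦃X Y : A⦄, B X → B Y → B (X ⊞ Y)) :
    (IsCoreflectiveSub B ↔
      (Precovering B ∧ ∀ ⦃X Y : A⦄, B X → B Y → ∀ f : X ⟶ Y, B (cokernel f))) ∧
    (IsReflectiveSub B ↔
      (Preenveloping B ∧ ∀ ⦃X Y : A⦄, B X → B Y → ∀ f : X ⟶ Y, B (kernel f))) :=
  preabelian_coreflective_reflective_iff_general B hiso

end PaperStmt
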